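/- arXiv:2512.04541 — 6 statements merged into one kernel-verified Lean document; each statement's English description precedes it below -/
import Mathlib

section
/- Let D(β;λ) := ψ²(δβ²ρ+1) + (1-ρ²)(1-δβ²ρ)(s/τ) and F(β;λ) := δβ² + ψ²ρ(1-δ²β⁴)/D(β;λ), where λ = (δ,ψ,ρ,s,τ). Fix λ₀ = (δ₀,ψ₀,ρ₀,s₀,τ₀) with |δ₀| < 1, |ρ₀| < 1, ψ₀ ≠ 0, s₀ > 0, τ₀ > 0. Then there exists a constant c > 0 such that for every β ∈ [0,1], the Euclidean norm of the gradient of λ ↦ F(β;λ) at λ₀ (the vector of partial derivatives with respect to δ, ψ, ρ, s, τ) is at least c. -/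
/-!
`F(β;λ)` depends on `δ, β` only through `a = δβ²` and on `s, τ` only through `κ = s/τ`, and
`|a| ≤ |δ₀| < 1` for every `β ∈ [0,1]`. A partial derivative is bounded by the norm of the
gradient, so it suffices to bound one partial derivative away from zero uniformly in `a`.
If `ρ₀ ≠ 0`, take `∂F/∂ψ = 2ψρ(1-a²)(1-ρ²)(1-aρ)κ / D²`: every factor of the numerator is
bounded below and `0 < D ≤ 2(ψ² + κ)`. If `ρ₀ = 0`, take `∂F/∂ρ = ψ²(1-a²)/(ψ² + κ)`.
-/

/-- The fixed-point map `F(β;λ)` with parameter vector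
`λ = (δ,ψ,ρ,s,τ) ∈ ℝ⁵` (Euclidean space, so `‖·‖` is the Euclidean norm). -/
noncomputable def Ffun (β : ℝ) (l : EuclideanSpace ℝ (Fin 5)) : ℝ :=
  l 0 * β ^ 2 +
    (l 1) ^ 2 * l 2 * (1 - (l 0) ^ 2 * β ^ 4) /
      ((l 1) ^ 2 * (l 0 * β ^ 2 * l 2 + 1) +
        (1 - (l 2) ^ 2) * (1 - l 0 * β ^ 2 * l 2) * (l 3 / l 4))

open scoped RealInnerProductSpace

lemma abs_le_norm_gradient_mul_norm_of_hasLineDerivAt {E : Type*} [NormedAddCommGroup E]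
    [InnerProductSpace ℝ E] [CompleteSpace E] {f : E → ℝ} {x v : E} {e : ℝ}
    (hf : DifferentiableAt ℝ f x) (he : HasLineDerivAt ℝ f e x v) :
    |e| ≤ ‖gradient f x‖ * ‖v‖ := by
  have he' : e = ⟪gradient f x, v⟫ :=
    he.unique (hf.hasGradientAt.hasFDerivAt.hasLineDerivAt v)
  exact he' ▸ abs_real_inner_le_norm _ _

def nkpcDenom (a ψ ρ κ : ℝ) : ℝ := ψ ^ 2 * (a * ρ + 1) + (1 - ρ ^ 2) * (1 - a * ρ) * κ

noncomputable def nkpcMap (a ψ ρ κ : ℝ) : ℝ := a + ψ ^ 2 * ρ * (1 - a ^ 2) / nkpcDenom a ψ ρ κ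

noncomputable def nkpcMapDerivPsi (a ψ ρ κ : ℝ) : ℝ :=
  2 * (ψ * ρ) * ((1 - a ^ 2) * ((1 - ρ ^ 2) * (1 - a * ρ) * κ)) / nkpcDenom a ψ ρ κ ^ 2

section Reduced

variable {a d ψ ρ κ : ℝ}

lemma hasDerivAt_nkpcMap_psi (hD : nkpcDenom a ψ ρ κ ≠ 0) :
    HasDerivAt (fun x => nkpcMap a x ρ κ) (nkpcMapDerivPsi a ψ ρ κ) ψ := by
  have hnum : HasDerivAt (fun x => x ^ 2 * ρ * (1 - a ^ 2)) (2 * ψ * ρ * (1 - a ^ 2)) ψ := by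
    simpa using ((hasDerivAt_pow 2 ψ).mul_const ρ).mul_const (1 - a ^ 2)
  have hden : HasDerivAt (fun x => nkpcDenom a x ρ κ) (2 * ψ * (a * ρ + 1)) ψ := by
    unfold nkpcDenom
    simpa using ((hasDerivAt_pow 2 ψ).mul_const (a * ρ + 1)).add_const
      ((1 - ρ ^ 2) * (1 - a * ρ) * κ)
  refine ((hnum.div hden hD).const_add a).congr_deriv ?_
  unfold nkpcMapDerivPsi nkpcDenom at *
  field_simp
  ring

lemma hasDerivAt_nkpcMap_rho_zero (h : ψ ^ 2 + κ ≠ 0) :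
    HasDerivAt (fun x => nkpcMap a ψ x κ) (ψ ^ 2 * (1 - a ^ 2) / (ψ ^ 2 + κ)) 0 := by
  have hnum : HasDerivAt (fun x => ψ ^ 2 * x * (1 - a ^ 2)) (ψ ^ 2 * (1 - a ^ 2)) 0 := by
    simpa using ((hasDerivAt_id 0).const_mul (ψ ^ 2)).mul_const (1 - a ^ 2)
  have hden : DifferentiableAt ℝ (fun x => nkpcDenom a ψ x κ) 0 := by
    unfold nkpcDenom; fun_prop
  have hD₀ : nkpcDenom a ψ 0 κ = ψ ^ 2 + κ := by unfold nkpcDenom; ring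
  refine ((hnum.div hden.hasDerivAt (hD₀ ▸ h)).const_add a).congr_deriv ?_
  simp [hD₀]
  field_simp

lemma abs_mul_lt_one (ha : |a| ≤ 1) (hρ : |ρ| < 1) : |a * ρ| < 1 := by
  rw [abs_mul]; nlinarith [abs_nonneg a, abs_nonneg ρ]

lemma nkpcDenom_pos (ha : |a| ≤ 1) (hρ : |ρ| < 1) (hκ : 0 < κ) : 0 < nkpcDenom a ψ ρ κ := by
  obtain ⟨h₁, h₂⟩ := abs_lt.mp (abs_mul_lt_one ha hρ)
  have hρ2 : ρ ^ 2 < 1 := by nlinarith [sq_abs ρ, abs_nonneg ρ]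
  have h : 0 < (1 - ρ ^ 2) * (1 - a * ρ) * κ := by
    apply mul_pos (mul_pos _ _) hκ <;> linarith
  unfold nkpcDenom
  nlinarith [sq_nonneg ψ]

lemma nkpcDenom_le (ha : |a| ≤ 1) (hρ : |ρ| ≤ 1) (hκ : 0 ≤ κ) :
    nkpcDenom a ψ ρ κ ≤ 2 * (ψ ^ 2 + κ) := by
  have h : |a * ρ| ≤ 1 := by rw [abs_mul]; nlinarith [abs_nonneg a, abs_nonneg ρ]
  obtain ⟨h₁, h₂⟩ := abs_le.mp h
  have h' : (1 - ρ ^ 2) * (1 - a * ρ) ≤ 2 := by nlinarith [sq_nonneg ρ]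
  unfold nkpcDenom
  nlinarith [sq_nonneg ψ]

lemma le_abs_nkpcMapDerivPsi (ha : |a| ≤ d) (hd : d < 1) (hρ : |ρ| < 1) (hκ : 0 < κ) :
    2 * |ψ * ρ| * ((1 - d ^ 2) * ((1 - ρ ^ 2) * (1 - d) * κ)) / (2 * (ψ ^ 2 + κ)) ^ 2 ≤
      |nkpcMapDerivPsi a ψ ρ κ| := by
  have ha1 : |a| ≤ 1 := ha.trans hd.le
  have hD := nkpcDenom_pos (ψ := ψ) ha1 hρ hκ
  have hd0 : 0 ≤ d := (abs_nonneg a).trans ha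
  have haρ : |a * ρ| ≤ d := by rw [abs_mul]; nlinarith [abs_nonneg a, abs_nonneg ρ]
  have hρ2 : ρ ^ 2 < 1 := by nlinarith [sq_abs ρ, abs_nonneg ρ]
  have ha2 : a ^ 2 ≤ d ^ 2 := by nlinarith [sq_abs a, abs_nonneg a]
  have ha2' : 0 ≤ 1 - a ^ 2 := by linarith [pow_le_one₀ hd0 hd.le (n := 2)]
  obtain ⟨-, haρ'⟩ := abs_le.mp haρ
  have hX : 0 ≤ (1 - a ^ 2) * ((1 - ρ ^ 2) * (1 - a * ρ) * κ) := by
    apply mul_nonneg ha2' (mul_nonneg (mul_nonneg _ _) hκ.le) <;> linarith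
  rw [nkpcMapDerivPsi, abs_div, abs_mul (2 * (ψ * ρ)), abs_mul 2, abs_two, abs_of_nonneg hX,
    abs_of_pos (pow_pos hD 2)]
  gcongr
  exact nkpcDenom_le ha1 hρ.le hκ.le

lemma exists_pos_le_abs_nkpcMapDerivPsi (hψρ : ψ * ρ ≠ 0) (hd : |d| < 1) (hρ : |ρ| < 1)
    (hκ : 0 < κ) : ∃ c > 0, ∀ a, |a| ≤ |d| → c ≤ |nkpcMapDerivPsi a ψ ρ κ| := by
  refine ⟨_, ?_, fun a ha => le_abs_nkpcMapDerivPsi ha hd hρ hκ⟩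
  have hd2 : 0 < 1 - |d| ^ 2 := by nlinarith [abs_nonneg d]
  have hρ2 : 0 < 1 - ρ ^ 2 := by nlinarith [sq_abs ρ, abs_nonneg ρ]
  have hd1 : 0 < 1 - |d| := by linarith
  positivity

lemma exists_pos_le_abs_nkpcMapDerivRho_zero (hψ : ψ ≠ 0) (hd : |d| < 1) (hκ : 0 < κ) :
    ∃ c > 0, ∀ a, |a| ≤ |d| → c ≤ |ψ ^ 2 * (1 - a ^ 2) / (ψ ^ 2 + κ)| := by
  have hd2 : 0 < 1 - |d| ^ 2 := by nlinarith [abs_nonneg d]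
  refine ⟨ψ ^ 2 * (1 - |d| ^ 2) / (ψ ^ 2 + κ), by positivity, fun a ha => ?_⟩
  have ha2 : a ^ 2 ≤ |d| ^ 2 := sq_le_sq.mpr (by simpa using ha)
  refine le_trans ?_ (le_abs_self _)
  gcongr

end Reduced

lemma Ffun_eq_nkpcMap (β : ℝ) (l : EuclideanSpace ℝ (Fin 5)) :
    Ffun β l = nkpcMap (l 0 * β ^ 2) (l 1) (l 2) (l 3 / l 4) := by
  unfold Ffun nkpcMap nkpcDenom
  ring

section Ffun

variable {β : ℝ} {l : EuclideanSpace ℝ (Fin 5)}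

lemma differentiableAt_Ffun (h₄ : l 4 ≠ 0)
    (hD : nkpcDenom (l 0 * β ^ 2) (l 1) (l 2) (l 3 / l 4) ≠ 0) :
    DifferentiableAt ℝ (Ffun β) l := by
  unfold Ffun
  unfold nkpcDenom at hD
  fun_prop (disch := assumption)

lemma hasLineDerivAt_Ffun_single_one (hD : nkpcDenom (l 0 * β ^ 2) (l 1) (l 2) (l 3 / l 4) ≠ 0) :
    HasLineDerivAt ℝ (Ffun β) (nkpcMapDerivPsi (l 0 * β ^ 2) (l 1) (l 2) (l 3 / l 4)) l
      (EuclideanSpace.single 1 1) := by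
  have h := HasDerivAt.comp_const_add (l 1) 0 (by simpa using hasDerivAt_nkpcMap_psi hD)
  unfold HasLineDerivAt
  simpa [Ffun_eq_nkpcMap] using h

lemma hasLineDerivAt_Ffun_single_two (h₂ : l 2 = 0) (h : l 1 ^ 2 + l 3 / l 4 ≠ 0) :
    HasLineDerivAt ℝ (Ffun β)
      (l 1 ^ 2 * (1 - (l 0 * β ^ 2) ^ 2) / (l 1 ^ 2 + l 3 / l 4)) l
      (EuclideanSpace.single 2 1) := by
  unfold HasLineDerivAt
  simpa [Ffun_eq_nkpcMap, h₂] using hasDerivAt_nkpcMap_rho_zero (a := l 0 * β ^ 2) h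

end Ffun

/-- If `|δ₀| < 1`, `|ρ₀| < 1`, `ψ₀ ≠ 0`, `s₀ > 0`, `τ₀ > 0`, then the Euclidean norm of
the gradient of `λ ↦ F(β;λ)` at `λ₀` is bounded below by some `c > 0`,
uniformly over `β ∈ [0,1]`. -/
theorem gradient_F_uniform_lower_bound (lam0 : EuclideanSpace ℝ (Fin 5))
    (hδ : |lam0 0| < 1) (hρ : |lam0 2| < 1) (hψ : lam0 1 ≠ 0)
    (hs : 0 < lam0 3) (hτ : 0 < lam0 4) :
    ∃ c > 0, ∀ β ∈ Set.Icc (0 : ℝ) 1,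
      c ≤ ‖gradient (fun l => Ffun β l) lam0‖ := by
  have hκ : 0 < lam0 3 / lam0 4 := div_pos hs hτ
  have ha : ∀ β ∈ Set.Icc (0 : ℝ) 1, |lam0 0 * β ^ 2| ≤ |lam0 0| := fun β hβ => by
    rw [abs_mul, abs_of_nonneg (sq_nonneg β)]
    exact mul_le_of_le_one_right (abs_nonneg _) (pow_le_one₀ hβ.1 hβ.2)
  have hD : ∀ β ∈ Set.Icc (0 : ℝ) 1,
      nkpcDenom (lam0 0 * β ^ 2) (lam0 1) (lam0 2) (lam0 3 / lam0 4) ≠ 0 :=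
    fun β hβ => (nkpcDenom_pos ((ha β hβ).trans hδ.le) hρ hκ).ne'
  have hgrad : ∀ β ∈ Set.Icc (0 : ℝ) 1, ∀ i e,
      HasLineDerivAt ℝ (Ffun β) e lam0 (EuclideanSpace.single i 1) →
        |e| ≤ ‖gradient (fun l => Ffun β l) lam0‖ := fun β hβ i e he => by
    simpa using abs_le_norm_gradient_mul_norm_of_hasLineDerivAt
      (differentiableAt_Ffun hτ.ne' (hD β hβ)) he
  rcases eq_or_ne (lam0 2) 0 with hρ₀ | hρ₀
  · obtain ⟨c, hc, hbound⟩ := exists_pos_le_abs_nkpcMapDerivRho_zero hψ hδ hκ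
    exact ⟨c, hc, fun β hβ => (hbound _ (ha β hβ)).trans
      (hgrad β hβ 2 _ (hasLineDerivAt_Ffun_single_two hρ₀ (by positivity)))⟩
  · obtain ⟨c, hc, hbound⟩ := exists_pos_le_abs_nkpcMapDerivPsi (mul_ne_zero hψ hρ₀) hδ hρ hκ
    exact ⟨c, hc, fun β hβ => (hbound _ (ha β hβ)).trans
      (hgrad β hβ 1 _ (hasLineDerivAt_Ffun_single_one (hD β hβ)))⟩
end

section
/- For real parameters γ, δ and β ∈ ℝ, define the 2×2 real matrix M(β) := [[δβ², δ(1-β²)], [γδβ², 1-γ(1-δ(1-β²))]]. If |δ| < 1 and 0 < γ < 1, then there exists c ∈ (0,1) such that for every β ∈ [-1,1], every complex eigenvalue μ of M(β) (i.e., every element of the spectrum of M(β) viewed as a complex matrix) satisfies |μ| ≤ c. -/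
/-!
The eigenvalues of `M(β)` are the roots of `μ² - T μ + D` with `T = tr M(β)` and
`D = det M(β) = δ β² (1 - γ)`. Non-real roots form a conjugate pair of modulus `√D ≤ √|δ|`.
Real roots stay at distance `ε / 2` from `±1` as soon as the polynomial is at least `ε > 0`
at `±1`; its values there, `γ (1 - δ)` and `2 - γ + γ δ + 2 D`, are at least
`ε = γ (1 - |δ|)` for all `β ∈ [-1, 1]`.
-/

open Matrix

/-- Upper-left 2×2 block of the companion matrix of the VAR(1) representation. -/
noncomputable def Mmat (γ δ β : ℝ) : Matrix (Fin 2) (Fin 2) ℝ :=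
  !![δ * β ^ 2, δ * (1 - β ^ 2);
     γ * δ * β ^ 2, 1 - γ * (1 - δ * (1 - β ^ 2))]

theorem Matrix.sq_sub_trace_mul_add_det_eq_zero_of_mem_spectrum
    {A : Matrix (Fin 2) (Fin 2) ℝ} {μ : ℂ}
    (hμ : μ ∈ spectrum ℂ (A.map (fun x : ℝ => (x : ℂ)))) :
    μ ^ 2 - (A.trace : ℂ) * μ + (A.det : ℂ) = 0 := by
  rw [mem_spectrum_iff_isRoot_charpoly, charpoly_fin_two] at hμ
  simpa [trace_fin_two, det_fin_two] using hμ

lemma trace_Mmat (γ δ β : ℝ) :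
    (Mmat γ δ β).trace = δ * β ^ 2 * (1 - γ) + 1 - γ + γ * δ := by
  rw [Mmat, trace_fin_two_of]; ring

lemma det_Mmat (γ δ β : ℝ) : (Mmat γ δ β).det = δ * β ^ 2 * (1 - γ) := by
  rw [Mmat, det_fin_two_of]; ring

lemma abs_det_Mmat_le (δ : ℝ) {γ β : ℝ} (hγ : γ ≤ 1) (hβ : β ^ 2 ≤ 1) :
    |(Mmat γ δ β).det| ≤ |δ| * (1 - γ) := by
  rw [det_Mmat, abs_mul, abs_mul, abs_sq, abs_of_nonneg (sub_nonneg.mpr hγ)]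
  gcongr
  exact mul_le_of_le_one_right (abs_nonneg δ) hβ

theorem Complex.normSq_eq_of_quadratic_eq_zero_of_conj_ne {T D : ℝ} {μ : ℂ}
    (hμ : μ ^ 2 - T * μ + D = 0) (hconj : starRingEnd ℂ μ ≠ μ) :
    Complex.normSq μ = D := by
  have hμ' : starRingEnd ℂ μ ^ 2 - T * starRingEnd ℂ μ + D = 0 := by
    simpa using congrArg (starRingEnd ℂ) hμ
  have hsum : μ + starRingEnd ℂ μ = T := by
    have h : (μ - starRingEnd ℂ μ) * (μ + starRingEnd ℂ μ - T) = 0 := by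
      linear_combination hμ - hμ'
    linear_combination (mul_eq_zero.mp h).resolve_left (sub_ne_zero.mpr hconj.symm)
  exact_mod_cast (show (Complex.normSq μ : ℂ) = D by
    rw [Complex.normSq_eq_conj_mul_self]; linear_combination μ * hsum - hμ)

theorem abs_le_of_quadratic_eq_zero {T D ε x : ℝ} (hx : x ^ 2 - T * x + D = 0)
    (hD : D < 1) (hε : 0 < ε) (h₁ : ε ≤ 1 - T + D) (h₂ : ε ≤ 1 + T + D) :
    |x| ≤ 1 - ε / 2 := by
  set ν := T - x
  have hprod : x * ν = D := by linear_combination -hx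
  have hp₁ : (1 - x) * (1 - ν) = 1 - T + D := by linear_combination hprod
  have hp₂ : (1 + x) * (1 + ν) = 1 + T + D := by linear_combination hprod
  have hlt : x < 1 ∧ ν < 1 := by
    rcases mul_pos_iff.mp (hp₁ ▸ hε.trans_le h₁) with ⟨ha, hb⟩ | ⟨ha, hb⟩
    · exact ⟨by linarith, by linarith⟩
    · nlinarith
  have hgt : -1 < x ∧ -1 < ν := by
    rcases mul_pos_iff.mp (hp₂ ▸ hε.trans_le h₂) with ⟨ha, hb⟩ | ⟨ha, hb⟩
    · exact ⟨by linarith, by linarith⟩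
    · nlinarith
  rw [abs_le]
  constructor <;> nlinarith

theorem Complex.norm_le_of_quadratic_eq_zero {T D d ε : ℝ} {μ : ℂ}
    (hμ : μ ^ 2 - T * μ + D = 0) (hDd : D ≤ d) (hd : d < 1) (hε : 0 < ε)
    (h₁ : ε ≤ 1 - T + D) (h₂ : ε ≤ 1 + T + D) :
    ‖μ‖ ≤ max (√d) (1 - ε / 2) := by
  by_cases hconj : starRingEnd ℂ μ = μ
  · obtain ⟨x, rfl⟩ := Complex.conj_eq_iff_real.mp hconj
    have hx : x ^ 2 - T * x + D = 0 := by exact_mod_cast hμ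
    rw [Complex.norm_real, Real.norm_eq_abs]
    exact le_max_of_le_right (abs_le_of_quadratic_eq_zero hx (hDd.trans_lt hd) hε h₁ h₂)
  · rw [Complex.norm_def, Complex.normSq_eq_of_quadratic_eq_zero_of_conj_ne hμ hconj]
    exact le_max_of_le_left (Real.sqrt_le_sqrt hDd)

/-- If `|δ| < 1` and `0 < γ < 1`, there is `c ∈ (0,1)` with: for every `β ∈ [-1,1]`,
every complex eigenvalue `μ` of `M(β)` (element of the spectrum of `M(β)` viewed as a
complex matrix) satisfies `|μ| ≤ c`. -/
theorem spectral_radius_uniformly_below_one (γ δ : ℝ)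
    (hδ : |δ| < 1) (hγ0 : 0 < γ) (hγ1 : γ < 1) :
    ∃ c ∈ Set.Ioo (0 : ℝ) 1, ∀ β ∈ Set.Icc (-1 : ℝ) 1,
      ∀ μ ∈ spectrum ℂ ((Mmat γ δ β).map (fun x : ℝ => (x : ℂ))),
        ‖μ‖ ≤ c := by
  have hε : 0 < γ * (1 - |δ|) := mul_pos hγ0 (by linarith)
  have hεlt : γ * (1 - |δ|) < 1 := by nlinarith [abs_nonneg δ]
  refine ⟨max (√|δ|) (1 - γ * (1 - |δ|) / 2), ⟨?_, ?_⟩, ?_⟩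
  · exact lt_max_of_lt_right (by linarith)
  · exact max_lt ((Real.sqrt_lt' one_pos).mpr (by simpa using hδ)) (by linarith)
  intro β hβ μ hμ
  have hβ2 : β ^ 2 ≤ 1 := sq_le_one_iff_abs_le_one β |>.mpr (abs_le.mpr hβ)
  obtain ⟨hdetl, hdetu⟩ := abs_le.mp (abs_det_Mmat_le δ hγ1.le hβ2)
  have hchar := sq_sub_trace_mul_add_det_eq_zero_of_mem_spectrum hμ
  rw [trace_Mmat] at hchar
  rw [det_Mmat] at hchar hdetl hdetu
  refine Complex.norm_le_of_quadratic_eq_zero hchar ?_ hδ hε ?_ ?_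
  · nlinarith [abs_nonneg δ]
  · nlinarith [le_abs_self δ]
  · nlinarith [neg_abs_le δ, mul_nonneg (sub_nonneg.mpr hγ1.le) (sub_nonneg.mpr hδ.le)]
end

section
/- For real parameters γ, δ and β ∈ ℝ, define the 2×2 real matrix M(β) := [[δβ², δ(1-β²)], [γδβ², 1-γ(1-δ(1-β²))]], and let T := trace M(β) and Δ := det M(β). Then Δ = δβ²(1-γ) and T = δβ² + (1-γ) + γδ(1-β²); moreover, if |δ| < 1, 0 < γ < 1, and β ∈ [-1,1], then |Δ| < 1, 1 - T + Δ = γ(1-δ) > 0, and 1 + T + Δ = 2 - γ(1-δ) + 2δβ²(1-γ) > 0. -/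
open Matrix

/-- Trace–determinant (Jury) conditions for `M(β)`: with `T = trace M(β)` and
`Δ = det M(β)`, one has `Δ = δβ²(1-γ)`, `T = δβ² + (1-γ) + γδ(1-β²)`; and if
`|δ| < 1`, `0 < γ < 1`, `β ∈ [-1,1]`, then `|Δ| < 1`, `1 - T + Δ = γ(1-δ) > 0`,
and `1 + T + Δ = 2 - γ(1-δ) + 2δβ²(1-γ) > 0`. -/
theorem jury_conditions (γ δ β : ℝ) :
    (Mmat γ δ β).det = δ * β ^ 2 * (1 - γ) ∧
    (Mmat γ δ β).trace = δ * β ^ 2 + (1 - γ) + γ * δ * (1 - β ^ 2) ∧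
    (|δ| < 1 → 0 < γ → γ < 1 → β ∈ Set.Icc (-1 : ℝ) 1 →
      |(Mmat γ δ β).det| < 1 ∧
      (1 - (Mmat γ δ β).trace + (Mmat γ δ β).det = γ * (1 - δ) ∧
        0 < γ * (1 - δ)) ∧
      (1 + (Mmat γ δ β).trace + (Mmat γ δ β).det =
          2 - γ * (1 - δ) + 2 * δ * β ^ 2 * (1 - γ) ∧
        0 < 2 - γ * (1 - δ) + 2 * δ * β ^ 2 * (1 - γ))) := by
  have hdet : (Mmat γ δ β).det = δ * β ^ 2 * (1 - γ) := by
    simp [Mmat, Matrix.det_fin_two_of]; ring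
  have htr : (Mmat γ δ β).trace = δ * β ^ 2 + (1 - γ) + γ * δ * (1 - β ^ 2) := by
    simp [Mmat, Matrix.trace_fin_two_of]; ring
  refine ⟨hdet, htr, fun hδ hγ0 hγ1 hβ => ?_⟩
  obtain ⟨hδ1, hδ2⟩ := abs_lt.mp hδ
  obtain ⟨hβ1, hβ2⟩ := hβ
  have hβsq : β ^ 2 ≤ 1 := by nlinarith
  have hβ0 : (0:ℝ) ≤ β ^ 2 := sq_nonneg β
  have h1 : 0 ≤ (1 + δ) * β ^ 2 * (1 - γ) :=
    mul_nonneg (mul_nonneg (by linarith) hβ0) (by linarith)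
  have h2 : 0 ≤ (1 - β ^ 2) * (1 - γ) := mul_nonneg (by linarith) (by linarith)
  have h3 : 0 ≤ (1 - δ) * β ^ 2 * (1 - γ) :=
    mul_nonneg (mul_nonneg (by linarith) hβ0) (by linarith)
  refine ⟨?_, ⟨by rw [hdet, htr]; ring, by nlinarith⟩,
    ⟨by rw [hdet, htr]; ring, by nlinarith⟩⟩
  rw [hdet, abs_lt]
  constructor <;> nlinarith
end

section
/- For real parameters γ, δ, ψ, ρ, a and β ∈ ℝ, define the 3×3 real matrix A(β) with rows (δβ², δ(1-β²), ψρ), (γδβ², 1-γ(1-δ(1-β²)), γψρ), and (0, 0, ρ), and let c := (ψa, γψa, a) ∈ ℝ³. If γ ≠ 0, δ ≠ 1, and ρ ≠ 1, then the vector z* := (h, h, a/(1-ρ)) with h := ψa/((1-δ)(1-ρ)) satisfies z* = c + A(β)z*, and z* is the unique solution in ℝ³ of the equation z = c + A(β)z. -/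
open Matrix

/- The fixed points of `z ↦ c + A z` are the solutions of `(1 - A) z = c`. For the companion
matrix, `det (1 - A(β)) = γ (1 - δ) (1 - ρ)` does not depend on `β`, so when it is nonzero the
fixed point is unique, and `z*` is checked to be one. -/

/-- Companion matrix `A(β)` of the time-varying VAR(1) representation. -/
noncomputable def Amat (γ δ ψ ρ β : ℝ) : Matrix (Fin 3) (Fin 3) ℝ :=
  !![δ * β ^ 2, δ * (1 - β ^ 2), ψ * ρ;
     γ * δ * β ^ 2, 1 - γ * (1 - δ * (1 - β ^ 2)), γ * ψ * ρ;
     0, 0, ρ]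

namespace Matrix

variable {n R : Type*} [Fintype n] [DecidableEq n]

theorem eq_add_mulVec_iff [Ring R] (A : Matrix n n R) (c z : n → R) :
    z = c + A *ᵥ z ↔ (1 - A) *ᵥ z = c := by
  rw [sub_mulVec, one_mulVec, sub_eq_iff_eq_add]

theorem eq_of_eq_add_mulVec [CommRing R] [NoZeroDivisors R] {A : Matrix n n R}
    (hA : (1 - A).det ≠ 0) {c z w : n → R} (hz : z = c + A *ᵥ z) (hw : w = c + A *ᵥ w) :
    z = w :=
  mulVec_injective_of_det_ne_zero hA <| by
    rw [(eq_add_mulVec_iff A c z).1 hz, (eq_add_mulVec_iff A c w).1 hw]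

end Matrix

theorem det_one_sub_Amat (γ δ ψ ρ β : ℝ) :
    (1 - Amat γ δ ψ ρ β).det = γ * (1 - δ) * (1 - ρ) := by
  simp only [Amat, det_fin_three, one_fin_three, Matrix.sub_apply, of_apply, cons_val',
    cons_val_zero, cons_val_one, cons_val_two, cons_val_fin_one, tail_cons, vecHead]
  ring

/-- With intercept vector `c = (ψa, γψa, a)` and `γ ≠ 0`, `δ ≠ 1`, `ρ ≠ 1`, the vector
`z* = (h, h, a/(1-ρ))` with `h = ψa/((1-δ)(1-ρ))` is the unique solution of
`z = c + A(β) z`. -/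
theorem fixed_point_of_affine_map (γ δ ψ ρ a β : ℝ)
    (hγ : γ ≠ 0) (hδ : δ ≠ 1) (hρ : ρ ≠ 1) :
    let c : Fin 3 → ℝ := ![ψ * a, γ * ψ * a, a]
    let h : ℝ := ψ * a / ((1 - δ) * (1 - ρ))
    let zstar : Fin 3 → ℝ := ![h, h, a / (1 - ρ)]
    zstar = c + (Amat γ δ ψ ρ β).mulVec zstar ∧
      ∀ z : Fin 3 → ℝ, z = c + (Amat γ δ ψ ρ β).mulVec z → z = zstar := by
  intro c h zstar
  have hδ' : 1 - δ ≠ 0 := sub_ne_zero.mpr hδ.symm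
  have hρ' : 1 - ρ ≠ 0 := sub_ne_zero.mpr hρ.symm
  have hfix : zstar = c + (Amat γ δ ψ ρ β).mulVec zstar := by
    ext i
    fin_cases i <;> simp [c, h, zstar, Amat] <;> field_simp <;> ring
  have hdet : (1 - Amat γ δ ψ ρ β).det ≠ 0 := by
    rw [det_one_sub_Amat]
    exact mul_ne_zero (mul_ne_zero hγ hδ') hρ'
  exact ⟨hfix, fun z hz => eq_of_eq_add_mulVec hdet hz hfix⟩
end

section
/- Let γ ∈ (0,1), t ≥ 1 an integer, and x : ℕ → ℝ. Then |Σ_{i=1}^{t-1} (1-γ)^{t-i} x_i x_{i+1}| ≤ √(1-γ) · Σ_{i=1}^{t} (1-γ)^{t-i} x_i². Consequently, whenever the denominator Σ_{i=1}^{t} (1-γ)^{t-i} x_i² is strictly positive, the ratio β_t := (Σ_{i=1}^{t-1} (1-γ)^{t-i} x_i x_{i+1}) / (Σ_{i=1}^{t} (1-γ)^{t-i} x_i²) satisfies |β_t| ≤ √(1-γ) < 1. -/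
open Finset

/-- Discounted Cauchy–Schwarz-type bound for the constant-gain sample autocorrelation:
the discounted cross-moment is bounded by `√(1-γ)` times the discounted second moment,
hence the SAC estimator `β_t` satisfies `|β_t| ≤ √(1-γ) < 1`. -/
theorem sac_ratio_bound (γ : ℝ) (hγ0 : 0 < γ) (hγ1 : γ < 1)
    (t : ℕ) (ht : 1 ≤ t) (x : ℕ → ℝ) :
    |∑ i ∈ Finset.Icc 1 (t - 1), (1 - γ) ^ (t - i) * (x i * x (i + 1))| ≤
        Real.sqrt (1 - γ) * ∑ i ∈ Finset.Icc 1 t, (1 - γ) ^ (t - i) * x i ^ 2 ∧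
      (0 < ∑ i ∈ Finset.Icc 1 t, (1 - γ) ^ (t - i) * x i ^ 2 →
        |(∑ i ∈ Finset.Icc 1 (t - 1), (1 - γ) ^ (t - i) * (x i * x (i + 1))) /
            (∑ i ∈ Finset.Icc 1 t, (1 - γ) ^ (t - i) * x i ^ 2)| ≤
            Real.sqrt (1 - γ) ∧
          Real.sqrt (1 - γ) < 1) := by
  set c := 1 - γ with hc
  have hc0 : (0:ℝ) < c := by simp [hc]; linarith
  have hc1 : c < 1 := by simp [hc]; linarith
  set s := Real.sqrt c with hs
  have hs0 : 0 ≤ s := Real.sqrt_nonneg _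
  have hss : s * s = c := Real.mul_self_sqrt hc0.le
  have hs1 : s < 1 := by nlinarith
  set S := ∑ i ∈ Finset.Icc 1 t, c ^ (t - i) * x i ^ 2 with hS
  have hSnn : ∀ i ∈ Finset.Icc 1 t, 0 ≤ c ^ (t - i) * x i ^ 2 := fun i _ =>
    mul_nonneg (pow_nonneg hc0.le _) (sq_nonneg _)
  -- termwise bound
  have key : ∀ i ∈ Finset.Icc 1 (t-1),
      |c ^ (t - i) * (x i * x (i+1))| ≤
      s * ((c ^ (t - i) * x i ^ 2 + c ^ (t - (i+1)) * x (i+1) ^ 2) / 2) := by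
    intro i hi
    obtain ⟨hi1, hi2⟩ := Finset.mem_Icc.mp hi
    have h1 : t - i = (t - (i+1)) + 1 := by omega
    set a := s ^ (t - i) * x i with ha
    set b := s ^ (t - (i+1)) * x (i+1) with hb
    have heq : c ^ (t - i) * (x i * x (i+1)) = s * (a * b) := by
      have : c ^ (t - i) = s * (s ^ (t - i) * s ^ (t - (i+1))) := by
        rw [← pow_add]
        have h2 : (t - i) + (t - (i+1)) + 1 = 2 * (t - i) := by omega
        calc c ^ (t - i) = (s * s) ^ (t - i) := by rw [hss]
          _ = s ^ (2 * (t - i)) := by rw [pow_mul, sq]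
          _ = s * s ^ ((t - i) + (t - (i+1))) := by
              rw [← h2]; ring
      rw [this, ha, hb]; ring
    have ha2 : a ^ 2 = c ^ (t - i) * x i ^ 2 := by
      rw [ha, mul_pow, ← pow_mul, pow_mul', sq, hss]
    have hb2 : b ^ 2 = c ^ (t - (i+1)) * x (i+1) ^ 2 := by
      rw [hb, mul_pow, ← pow_mul, pow_mul', sq, hss]
    rw [heq, abs_mul, abs_of_nonneg hs0, ← ha2, ← hb2]
    refine mul_le_mul_of_nonneg_left ?_ hs0
    rw [abs_le]
    constructor <;> nlinarith [sq_nonneg (a+b), sq_nonneg (a-b)]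
  have habs : |∑ i ∈ Finset.Icc 1 (t - 1), c ^ (t - i) * (x i * x (i + 1))| ≤
      ∑ i ∈ Finset.Icc 1 (t-1), s * ((c ^ (t - i) * x i ^ 2 + c ^ (t - (i+1)) * x (i+1) ^ 2) / 2) :=
    le_trans (Finset.abs_sum_le_sum_abs _ _) (Finset.sum_le_sum key)
  have hsub1 : (∑ i ∈ Finset.Icc 1 (t-1), c ^ (t - i) * x i ^ 2) ≤ S := by
    apply Finset.sum_le_sum_of_subset_of_nonneg
    · apply Finset.Icc_subset_Icc_right; omega
    · intro i hi _; exact hSnn i hi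
  have hsub2 : (∑ i ∈ Finset.Icc 1 (t-1), c ^ (t - (i+1)) * x (i+1) ^ 2) ≤ S := by
    have hre : (∑ i ∈ Finset.Icc 1 (t-1), c ^ (t - (i+1)) * x (i+1) ^ 2)
        = ∑ j ∈ Finset.Icc 2 t, c ^ (t - j) * x j ^ 2 := by
      rw [show Finset.Icc 2 t = Finset.Icc (1+1) ((t-1)+1) by congr 1; omega]
      rw [← Finset.map_add_right_Icc _ _ 1, Finset.sum_map]
      rfl
    rw [hre]
    apply Finset.sum_le_sum_of_subset_of_nonneg
    · apply Finset.Icc_subset_Icc_left; omega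
    · intro i hi _; exact hSnn i hi
  have hmain : |∑ i ∈ Finset.Icc 1 (t - 1), c ^ (t - i) * (x i * x (i + 1))| ≤ s * S := by
    refine le_trans habs ?_
    rw [← Finset.mul_sum]
    refine mul_le_mul_of_nonneg_left ?_ hs0
    rw [show (∑ i ∈ Finset.Icc 1 (t-1),
        (c ^ (t - i) * x i ^ 2 + c ^ (t - (i+1)) * x (i+1) ^ 2) / 2)
      = ((∑ i ∈ Finset.Icc 1 (t-1), c ^ (t - i) * x i ^ 2)
        + (∑ i ∈ Finset.Icc 1 (t-1), c ^ (t - (i+1)) * x (i+1) ^ 2)) / 2 by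
        rw [← Finset.sum_add_distrib, Finset.sum_div]]
    linarith
  refine ⟨hmain, fun hSpos => ⟨?_, hs1⟩⟩
  rw [abs_div, abs_of_pos hSpos, div_le_iff₀ hSpos]
  exact hmain
end

section
/- Let (Ω, F, P) be a probability space, X : Ω → ℝ a square-integrable random variable, and A, B ∈ F disjoint events with P(A) = p and P(B) = q. Let u, v ∈ ℝ with u ≥ v, and suppose X ≥ u almost everywhere on A and X ≤ v almost everywhere on B. Then Var[X] ≥ p·q·(u-v)². -/
/-!
With `p = P(A)`, `q = P(B)` and the centred contrast `Y = q·1_A - p·1_B`, one has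
`Cov[X, Y] = q ∫_A X - p ∫_B X ≥ p q (u - v)` and `Var[Y] = p q (p + q) ≤ p q`,
so Cauchy–Schwarz `Cov[X, Y]² ≤ Var[X] Var[Y]` gives `(p q (u - v))² ≤ p q Var[X]`.
-/

open MeasureTheory ProbabilityTheory

namespace ProbabilityTheory

variable {Ω : Type*} [MeasurableSpace Ω] {μ : Measure Ω} {X : Ω → ℝ} {A B : Set Ω}

lemma sq_covariance_le_variance_mul_variance [IsFiniteMeasure μ] {Y : Ω → ℝ}
    (hX : MemLp X 2 μ) (hY : MemLp Y 2 μ) :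
    cov[X, Y; μ] ^ 2 ≤ Var[X; μ] * Var[Y; μ] := by
  have hquad : ∀ t : ℝ, 0 ≤ Var[Y; μ] * (t * t) + (-2 * cov[X, Y; μ]) * t + Var[X; μ] := by
    intro t
    have h := variance_sub hX (hY.const_mul t)
    rw [variance_const_mul, covariance_const_mul_right] at h
    nlinarith [variance_nonneg (X - fun ω ↦ t * Y ω) μ]
  have := discrim_le_zero hquad
  rw [discrim] at this
  linarith

lemma covariance_indicator_const_right [IsProbabilityMeasure μ] (hX : MemLp X 2 μ)
    (hA : MeasurableSet A) (c : ℝ) :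
    cov[X, A.indicator (fun _ ↦ c); μ] = c * (∫ ω in A, X ω ∂μ - μ.real A * μ[X]) := by
  have hXA : X * A.indicator (fun _ ↦ c) = A.indicator (fun ω ↦ c * X ω) := by
    ext ω; by_cases h : ω ∈ A <;> simp [h, mul_comm]
  rw [covariance_eq_sub hX (memLp_indicator_const 2 hA c (.inr (measure_ne_top μ A))), hXA,
    integral_indicator hA, integral_const_mul, integral_indicator_const _ hA, smul_eq_mul]
  ring

lemma covariance_indicator_const_sub_indicator_const [IsProbabilityMeasure μ]
    (hX : MemLp X 2 μ) (hA : MeasurableSet A) (hB : MeasurableSet B) (a b : ℝ) :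
    cov[X, A.indicator (fun _ ↦ a) - B.indicator (fun _ ↦ b); μ]
      = a * (∫ ω in A, X ω ∂μ - μ.real A * μ[X]) - b * (∫ ω in B, X ω ∂μ - μ.real B * μ[X]) := by
  rw [covariance_sub_right hX (memLp_indicator_const 2 hA a (.inr (measure_ne_top μ A)))
      (memLp_indicator_const 2 hB b (.inr (measure_ne_top μ B))),
    covariance_indicator_const_right hX hA, covariance_indicator_const_right hX hB]

lemma variance_indicator_const_sub_indicator_const [IsProbabilityMeasure μ]
    (hA : MeasurableSet A) (hB : MeasurableSet B) (hAB : Disjoint A B) (a b : ℝ) :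
    Var[A.indicator (fun _ ↦ a) - B.indicator (fun _ ↦ b); μ]
      = a ^ 2 * μ.real A + b ^ 2 * μ.real B - (a * μ.real A - b * μ.real B) ^ 2 := by
  have hsq : (A.indicator (fun _ ↦ a) - B.indicator (fun _ ↦ b)) ^ 2
      = A.indicator (fun _ ↦ a ^ 2) + B.indicator (fun _ ↦ b ^ 2) := by
    ext ω
    by_cases hωA : ω ∈ A
    · simp [hωA, Set.disjoint_left.mp hAB hωA]
    · by_cases hωB : ω ∈ B <;> simp [hωA, hωB]
  have hint (s : Set Ω) (hs : MeasurableSet s) (c : ℝ) : Integrable (s.indicator fun _ ↦ c) μ :=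
    (integrable_const c).indicator hs
  rw [variance_eq_sub ((memLp_indicator_const 2 hA a (.inr (measure_ne_top μ A))).sub
      (memLp_indicator_const 2 hB b (.inr (measure_ne_top μ B)))), hsq,
    integral_add' (hint A hA _) (hint B hB _), integral_sub' (hint A hA _) (hint B hB _)]
  simp only [integral_indicator_const _ hA, integral_indicator_const _ hB, smul_eq_mul]
  ring

end ProbabilityTheory

/-- Variance lower bound: if `X` is square-integrable on a probability space,
`A`, `B` are disjoint events with probabilities `p`, `q`, and `X ≥ u` a.e. on `A`,
`X ≤ v` a.e. on `B` with `u ≥ v`, then `Var[X] ≥ p·q·(u-v)²`. -/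
theorem variance_lower_bound {Ω : Type*} [MeasurableSpace Ω]
    (P : Measure Ω) [IsProbabilityMeasure P]
    (X : Ω → ℝ) (hX : MemLp X 2 P)
    (A B : Set Ω) (hA : MeasurableSet A) (hB : MeasurableSet B)
    (hAB : Disjoint A B) (u v : ℝ) (huv : v ≤ u)
    (hXA : ∀ᵐ ω ∂P, ω ∈ A → u ≤ X ω)
    (hXB : ∀ᵐ ω ∂P, ω ∈ B → X ω ≤ v) :
    (P A).toReal * (P B).toReal * (u - v) ^ 2 ≤ variance X P := by
  change P.real A * P.real B * (u - v) ^ 2 ≤ Var[X; P]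
  set p := P.real A
  set q := P.real B
  have hpq : p + q ≤ 1 := by rw [← measureReal_union hAB hB]; exact measureReal_le_one
  set Y := A.indicator (fun _ ↦ q) - B.indicator (fun _ ↦ p)
  have hY : MemLp Y 2 P := (memLp_indicator_const 2 hA q (.inr (measure_ne_top P A))).sub
    (memLp_indicator_const 2 hB p (.inr (measure_ne_top P B)))
  have hXint := hX.integrable one_le_two
  have hIA : p * u ≤ ∫ ω in A, X ω ∂P := by
    simpa only [setIntegral_const, smul_eq_mul] using setIntegral_mono_on_ae
      (integrableOn_const (measure_ne_top P A)) hXint.integrableOn hA hXA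
  have hIB : ∫ ω in B, X ω ∂P ≤ q * v := by
    simpa only [setIntegral_const, smul_eq_mul] using setIntegral_mono_on_ae
      hXint.integrableOn (integrableOn_const (measure_ne_top P B)) hB hXB
  have hcov : p * q * (u - v) ≤ cov[X, Y; P] := by
    rw [covariance_indicator_const_sub_indicator_const hX hA hB]
    nlinarith [measureReal_nonneg (μ := P) (s := A), measureReal_nonneg (μ := P) (s := B)]
  have hvarY : Var[Y; P] = p * q * (p + q) := by
    rw [variance_indicator_const_sub_indicator_const hA hB hAB]; ring
  rcases (mul_nonneg measureReal_nonneg measureReal_nonneg : 0 ≤ p * q).eq_or_lt with hpq0 | hpq0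
  · rw [← hpq0, zero_mul]; exact variance_nonneg X P
  refine le_of_mul_le_mul_left ?_ hpq0
  calc p * q * (p * q * (u - v) ^ 2) = (p * q * (u - v)) ^ 2 := by ring
    _ ≤ cov[X, Y; P] ^ 2 := by gcongr
    _ ≤ Var[X; P] * (p * q * (p + q)) := hvarY ▸ sq_covariance_le_variance_mul_variance hX hY
    _ ≤ Var[X; P] * (p * q * 1) := by gcongr; exact variance_nonneg X P
    _ = p * q * Var[X; P] := by ring
end
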